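/- Let C be a field of characteristic 0 containing a primitive m-th root of unity (m ≥ 2), let k = C(t) be the rational function field with the derivation δ = d/dt (the derivation with δ(c) = 0 for c ∈ C and δ(t) = 1). Let λ_1, …, λ_m ∈ C be nonzero and pairwise distinct, let f ∈ k, and let P ∈ M_m(k) be the matrix with diagonal entries λ_1, …, λ_m, entry f in position (1,m), and zeros elsewhere. Define the derivation d_P on M_m(k) by d_P(Q) = δ^c(Q) + QP − PQ, where δ^c applies δ to each entry. Then for every integer m₁ with 1 < m₁ and m₁ dividing m, every φ ∈ k^× which is not an m₁-th power in k, and every X ∈ M_m(k) with X^{m₁} = φ·I_m, the k-subalgebra L generated by X (which by Kummer theory is the general form of a cyclic subfield of M_m(k) of degree m₁ > 1 over k) is not stable under d_P: there exists x ∈ L with d_P(x) ∉ L. -/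
import Mathlib



open Polynomial in
lemma aux_poly_deg_contra {C : Type*} [Field C] (c : C) (hc : c ≠ 0)
    (p q : C[X]) (hp : p ≠ 0) (hq : q ≠ 0)
    (h : derivative p * q = Polynomial.C c * (p * q) + p * derivative q) : False := by
  have key := congrArg (fun r => Polynomial.coeff r (p.natDegree + q.natDegree)) h
  simp only [coeff_add, coeff_C_mul] at key
  have h1 : (derivative p * q).coeff (p.natDegree + q.natDegree) = 0 := by
    rcases eq_or_ne (derivative p) 0 with h0 | h0
    · simp [h0]
    · apply coeff_eq_zero_of_natDegree_lt
      have hd : (derivative p).natDegree < p.natDegree :=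
        natDegree_derivative_lt (fun h' => h0 (by rw [eq_C_of_natDegree_eq_zero h']; simp))
      calc (derivative p * q).natDegree ≤ (derivative p).natDegree + q.natDegree :=
            natDegree_mul_le
        _ < p.natDegree + q.natDegree := by omega
  have h2 : (p * derivative q).coeff (p.natDegree + q.natDegree) = 0 := by
    rcases eq_or_ne (derivative q) 0 with h0 | h0
    · simp [h0]
    · apply coeff_eq_zero_of_natDegree_lt
      have hd : (derivative q).natDegree < q.natDegree :=
        natDegree_derivative_lt (fun h' => h0 (by rw [eq_C_of_natDegree_eq_zero h']; simp))
      calc (p * derivative q).natDegree ≤ p.natDegree + (derivative q).natDegree :=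
            natDegree_mul_le
        _ < p.natDegree + q.natDegree := by omega
  rw [h1, h2, coeff_mul_degree_add_degree] at key
  have : c * (p.leadingCoeff * q.leadingCoeff) ≠ 0 :=
    mul_ne_zero hc (mul_ne_zero (leadingCoeff_ne_zero.mpr hp) (leadingCoeff_ne_zero.mpr hq))
  rw [add_zero] at key
  exact this key.symm

lemma logderiv_const_contra {C : Type*} [Field C]
    (δ : RatFunc C → RatFunc C)
    (hδa : ∀ x y : RatFunc C, δ (x + y) = δ x + δ y)
    (hδm : ∀ x y : RatFunc C, δ (x * y) = x * δ y + δ x * y)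
    (hδC : ∀ c : C, δ (RatFunc.C c) = 0)
    (hδX : δ RatFunc.X = 1)
    (c : C) (hc : c ≠ 0) (r : RatFunc C) (hr : r ≠ 0)
    (heq : δ r = RatFunc.C c * r) : False := by
  have hδpoly : ∀ p : Polynomial C,
      δ (algebraMap (Polynomial C) (RatFunc C) p)
        = algebraMap (Polynomial C) (RatFunc C) (Polynomial.derivative p) := by
    intro p
    induction p using Polynomial.induction_on with
    | C a => simpa using hδC a
    | add p q hp hq => rw [map_add, hδa, hp, hq, map_add, map_add]
    | monomial n a ih =>
        have e1 : (Polynomial.C a) * Polynomial.X ^ (n+1)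
            = (Polynomial.C a * Polynomial.X ^ n) * Polynomial.X := by ring
        rw [e1, map_mul, hδm, ih, RatFunc.algebraMap_X, hδX, mul_one, ← RatFunc.algebraMap_X (K := C),
          ← map_mul, ← map_add]
        congr 1
        cases n with
        | zero => simp
        | succ n => simp [Polynomial.derivative_C_mul, Polynomial.derivative_X_pow]; ring
  set p := r.num with hpdef
  set q := r.denom with hqdef
  have hq0 : q ≠ 0 := r.denom_ne_zero
  have hp0 : p ≠ 0 := RatFunc.num_ne_zero hr
  have haq : algebraMap (Polynomial C) (RatFunc C) q ≠ 0 := RatFunc.algebraMap_ne_zero hq0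
  have h1 : r * algebraMap (Polynomial C) (RatFunc C) q = algebraMap (Polynomial C) (RatFunc C) p := by
    rw [← RatFunc.num_div_denom r, div_mul_cancel₀ _ haq]
  have h2 := congrArg δ h1
  rw [hδm, hδpoly, hδpoly, heq] at h2
  have key : (algebraMap (Polynomial C) (RatFunc C)) (Polynomial.derivative p * q)
      = (algebraMap (Polynomial C) (RatFunc C))
          (Polynomial.C c * (p * q) + p * Polynomial.derivative q) := by
    simp only [map_mul, map_add, RatFunc.algebraMap_C]
    linear_combination (algebraMap (Polynomial C) (RatFunc C) (Polynomial.derivative q)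
      + RatFunc.C c * algebraMap (Polynomial C) (RatFunc C) q) * h1
      - algebraMap (Polynomial C) (RatFunc C) q * h2
  exact aux_poly_deg_contra c hc p q hp0 hq0 (RatFunc.algebraMap_injective C key)

lemma deriv_pow_aux {A : Type*} [Ring A] (d : A → A)
    (hd : ∀ x y : A, d (x * y) = d x * y + x * d y)
    (hd1 : d 1 = 0)
    (X : A) (hcomm : d X * X = X * d X) :
    ∀ n : ℕ, X * d (X ^ n) = n • (X ^ n * d X) := by
  have hcomm' : ∀ n : ℕ, d X * X ^ n = X ^ n * d X := by
    intro n
    induction n with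
    | zero => simp
    | succ n ih => rw [pow_succ, ← mul_assoc, ih, mul_assoc, hcomm, ← mul_assoc]
  intro n
  induction n with
  | zero => simp [hd1]
  | succ n ih =>
      rw [pow_succ, hd, mul_add, ← mul_assoc X (d (X ^ n)) X, ih, smul_mul_assoc,
        mul_assoc (X ^ n) (d X) X, hcomm, ← mul_assoc, ← pow_succ, ← mul_assoc,
        ← pow_succ', succ_nsmul]

set_option synthInstance.maxHeartbeats 400000
set_option maxHeartbeats 1000000

/-- Over `k = C(t)` with the derivation `d/dt`, for the matrix `P` with
distinct nonzero diagonal entries `λ₁,…,λ_m ∈ C` and `f` in position `(1,m)`, no cyclic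
subfield `L = k(X)` of `M_m(k)` with `[L:k] = m₁ > 1` (given by Kummer theory by
`X^{m₁} = φ·I` with `φ` not an `m₁`-th power) is stable under `d_P`. -/
theorem matrix_dP_no_cyclic_differential_subfield
    {C : Type*} [Field C] [CharZero C] {m : ℕ} (hm : 2 ≤ m)
    {ω : C} (hω : IsPrimitiveRoot ω m)
    (δ : RatFunc C → RatFunc C)
    (hδa : ∀ x y : RatFunc C, δ (x + y) = δ x + δ y)
    (hδm : ∀ x y : RatFunc C, δ (x * y) = x * δ y + δ x * y)
    (hδC : ∀ c : C, δ (RatFunc.C c) = 0)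
    (hδX : δ RatFunc.X = 1)
    (lam : Fin m → C) (hlam : ∀ i, lam i ≠ 0) (hinj : Function.Injective lam)
    (f : RatFunc C)
    (P : Matrix (Fin m) (Fin m) (RatFunc C))
    (hP : ∀ i j : Fin m, P i j =
      (if i = j then RatFunc.C (lam i) else 0) +
      (if i = (⟨0, by omega⟩ : Fin m) ∧ j = (⟨m - 1, by omega⟩ : Fin m) then f else 0))
    (m₁ : ℕ) (hm₁ : 1 < m₁) (hdvd : m₁ ∣ m)
    (φ : RatFunc C) (hφ : φ ≠ 0) (hpow : ¬ ∃ y : RatFunc C, y ^ m₁ = φ)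
    (X : Matrix (Fin m) (Fin m) (RatFunc C))
    (hX : X ^ m₁ = φ • (1 : Matrix (Fin m) (Fin m) (RatFunc C))) :
    ∃ x ∈ Algebra.adjoin (RatFunc C) ({X} : Set (Matrix (Fin m) (Fin m) (RatFunc C))),
      x.map δ + x * P - P * x ∉
        Algebra.adjoin (RatFunc C) ({X} : Set (Matrix (Fin m) (Fin m) (RatFunc C))) := by
  classical
  haveI : CharZero (RatFunc C) :=
    charZero_of_injective_algebraMap (algebraMap C (RatFunc C)).injective
  refine ⟨X, Algebra.self_mem_adjoin_singleton _ _, fun hD => ?_⟩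
  set i0 : Fin m := ⟨0, by omega⟩ with hi0
  set i1 : Fin m := ⟨m - 1, by omega⟩ with hi1
  have hne : i1 ≠ i0 := by
    simp only [hi0, hi1, Fin.mk.injEq, ne_eq]
    omega
  -- basic derivation facts
  have hδ0 : δ 0 = 0 := by
    have h := hδa 0 0
    rw [add_zero] at h
    linear_combination -h
  have hδ1 : δ 1 = 0 := by
    have h := hδm 1 1
    rw [mul_one, one_mul] at h
    linear_combination -h
  have hδsum : ∀ (s : Finset (Fin m)) (g : Fin m → RatFunc C),
      δ (∑ x ∈ s, g x) = ∑ x ∈ s, δ (g x) := by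
    intro s g
    induction s using Finset.cons_induction with
    | empty => simpa using hδ0
    | cons a s ha ih => rw [Finset.sum_cons, Finset.sum_cons, hδa, ih]
  have hδpow : ∀ (u : RatFunc C) (nn : ℕ),
      δ (u ^ (nn + 1)) = ((nn + 1 : ℕ) : RatFunc C) * (u ^ nn * δ u) := by
    intro u nn
    induction nn with
    | zero => simp
    | succ nn ih =>
        rw [pow_succ, hδm, ih]
        push_cast
        ring
  -- dP as a function, with Leibniz rule
  set dP : Matrix (Fin m) (Fin m) (RatFunc C) → Matrix (Fin m) (Fin m) (RatFunc C) :=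
    fun Q => Q.map δ + Q * P - P * Q with hdPdef
  have hLeib : ∀ Q R, dP (Q * R) = dP Q * R + Q * dP R := by
    intro Q R
    have hmap : (Q * R).map δ = Q.map δ * R + Q * R.map δ := by
      ext i j
      simp only [Matrix.map_apply, Matrix.mul_apply, Matrix.add_apply]
      rw [hδsum, ← Finset.sum_add_distrib]
      refine Finset.sum_congr rfl fun x _ => ?_
      rw [hδm]
      ring
    show (Q * R).map δ + (Q * R) * P - P * (Q * R)
        = (Q.map δ + Q * P - P * Q) * R + Q * (R.map δ + R * P - P * R)
    rw [hmap]
    noncomm_ring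
  have hdP1 : dP 1 = 0 := by
    show (1 : Matrix (Fin m) (Fin m) (RatFunc C)).map δ + 1 * P - P * 1 = 0
    rw [one_mul, mul_one]
    have : (1 : Matrix (Fin m) (Fin m) (RatFunc C)).map δ = 0 := by
      ext i j
      simp only [Matrix.map_apply, Matrix.one_apply, Matrix.zero_apply]
      split_ifs <;> simp [hδ0, hδ1]
    rw [this]
    abel
  set D : Matrix (Fin m) (Fin m) (RatFunc C) := X.map δ + X * P - P * X with hDdef
  have hDdP : dP X = D := rfl
  have hcomm : Commute X D := Algebra.commute_of_mem_adjoin_self hD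
  -- dP of X^m₁, computed two ways
  have hkey : X * dP (X ^ m₁) = m₁ • (X ^ m₁ * D) :=
    deriv_pow_aux dP hLeib hdP1 X hcomm.symm.eq m₁
  have hdPφ : dP (X ^ m₁) = δ φ • 1 := by
    rw [hX]
    show (φ • (1 : Matrix (Fin m) (Fin m) (RatFunc C))).map δ + (φ • 1) * P - P * (φ • 1)
        = δ φ • 1
    rw [smul_mul_assoc, mul_smul_comm, one_mul, mul_one]
    have : (φ • (1 : Matrix (Fin m) (Fin m) (RatFunc C))).map δ = δ φ • 1 := by
      ext i j
      simp only [Matrix.map_apply, Matrix.smul_apply, Matrix.one_apply, smul_eq_mul,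
        mul_ite, mul_one, mul_zero]
      split_ifs <;> simp [hδ0]
    rw [this]
    abel
  have hMφ : ((m₁ : RatFunc C) * φ) ≠ 0 :=
    mul_ne_zero (Nat.cast_ne_zero.mpr (by omega)) hφ
  have hkey2 : δ φ • X = ((m₁ : RatFunc C) * φ) • D := by
    rw [hdPφ, hX, smul_mul_assoc, one_mul, mul_smul_comm, mul_one,
      ← Nat.cast_smul_eq_nsmul (RatFunc C), smul_smul] at hkey
    exact hkey
  set g : RatFunc C := ((m₁ : RatFunc C) * φ)⁻¹ * δ φ with hgdef
  have hg : g * ((m₁ : RatFunc C) * φ) = δ φ := by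
    rw [hgdef, mul_comm, ← mul_assoc, mul_inv_cancel₀ hMφ, one_mul]
  have hDX : D = g • X := by
    have h := congrArg (fun M => ((m₁ : RatFunc C) * φ)⁻¹ • M) hkey2
    simp only [smul_smul, inv_mul_cancel₀ hMφ, one_smul] at h
    rw [← h, hgdef, mul_smul]
  -- entrywise equation on row i1
  have hentry : ∀ j : Fin m, j ≠ i1 →
      δ (X i1 j) * ((m₁ : RatFunc C) * φ)
        = δ φ * X i1 j
          + RatFunc.C (lam i1 - lam j) * ((m₁ : RatFunc C) * φ) * X i1 j := by
    intro j hj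
    have hXP : (X * P) i1 j = X i1 j * RatFunc.C (lam j) := by
      rw [Matrix.mul_apply]
      have e : ∀ x : Fin m, X i1 x * P x j
          = if x = j then X i1 x * RatFunc.C (lam x) else 0 := by
        intro x
        rw [hP]
        have : ¬(x = i0 ∧ j = i1) := fun h => hj h.2
        simp only [this, if_false, add_zero, mul_ite, mul_zero]
      rw [Finset.sum_congr rfl fun x _ => e x, Finset.sum_ite_eq' Finset.univ j
        (fun x => X i1 x * RatFunc.C (lam x))]
      simp
    have hPX : (P * X) i1 j = RatFunc.C (lam i1) * X i1 j := by
      rw [Matrix.mul_apply]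
      have e : ∀ x : Fin m, P i1 x * X x j
          = if i1 = x then RatFunc.C (lam i1) * X x j else 0 := by
        intro x
        rw [hP]
        have : ¬(i1 = i0 ∧ x = i1) := fun h => hne h.1
        simp only [this, if_false, add_zero, ite_mul, zero_mul]
      rw [Finset.sum_congr rfl fun x _ => e x]
      rw [Finset.sum_ite_eq Finset.univ i1 (fun x => RatFunc.C (lam i1) * X x j)]
      simp
    have hE := congrFun (congrFun hDX i1) j
    simp only [hDdef, Matrix.add_apply, Matrix.sub_apply, Matrix.map_apply,
      Matrix.smul_apply, smul_eq_mul] at hE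
    rw [hXP, hPX] at hE
    rw [map_sub]
    linear_combination ((m₁ : RatFunc C) * φ) * hE + X i1 j * hg
  -- row i1 is diagonal
  obtain ⟨n, rfl⟩ : ∃ n, m₁ = n + 1 := ⟨m₁ - 1, by omega⟩
  have hrow : ∀ j : Fin m, j ≠ i1 → X i1 j = 0 := by
    intro j hj
    by_contra hu
    set u : RatFunc C := X i1 j with hudef
    have hc : lam i1 - lam j ≠ 0 :=
      sub_ne_zero.mpr fun h => hj (hinj h).symm
    set c' : C := ((n + 1 : ℕ) : C) * (lam i1 - lam j) with hc'def
    have hc' : c' ≠ 0 := mul_ne_zero (Nat.cast_ne_zero.mpr (by omega)) hc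
    set r : RatFunc C := u ^ (n + 1) * φ⁻¹ with hrdef
    have hrne : r ≠ 0 := mul_ne_zero (pow_ne_zero _ hu) (inv_ne_zero hφ)
    have h7 : r * φ = u ^ (n + 1) := by
      rw [hrdef, mul_assoc, inv_mul_cancel₀ hφ, mul_one]
    have h6 : δ (r * φ) = r * δ φ + δ r * φ := hδm r φ
    rw [h7, hδpow] at h6
    have hE2 := hentry j hj
    have h8 : RatFunc.C c' = ((n + 1 : ℕ) : RatFunc C) * RatFunc.C (lam i1 - lam j) := by
      rw [hc'def, map_mul, map_natCast]
    have h5 : δ r * φ * φ = RatFunc.C c' * r * φ * φ := by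
      rw [h8]
      linear_combination φ * (-h6) + u ^ n * hE2
        - (δ φ + ((n + 1 : ℕ) : RatFunc C) * RatFunc.C (lam i1 - lam j) * φ) * h7
    have hδr : δ r = RatFunc.C c' * r :=
      mul_right_cancel₀ hφ (mul_right_cancel₀ hφ h5)
    exact logderiv_const_contra δ hδa hδm hδC hδX c' hc' r hrne hδr
  -- conclude: (X i1 i1) ^ m₁ = φ
  have hpowrow : ∀ nn : ℕ, (X ^ nn) i1 i1 = (X i1 i1) ^ nn := by
    intro nn
    induction nn with
    | zero => simp [Matrix.one_apply]
    | succ nn ih =>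
        rw [pow_succ', Matrix.mul_apply, Finset.sum_eq_single i1]
        · rw [ih, ← pow_succ']
        · intro b _ hb
          rw [hrow b hb, zero_mul]
        · intro h
          exact absurd (Finset.mem_univ i1) h
  apply hpow
  refine ⟨X i1 i1, ?_⟩
  have h := congrFun (congrFun hX i1) i1
  rw [hpowrow] at h
  simpa using h
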